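/- arXiv:2511.03516 — 5 statements merged into one kernel-verified Lean document; each statement's English description precedes it below -/
import Mathlib

section
/- Let $U,W:[0,1]^2\to[0,1]$ be graphons, and suppose there exists $\varepsilon>0$ such that $d_W(x)>\varepsilon$ and $d_U(x)>\varepsilon$ for almost every $x\in[0,1]$. Then the random walk kernels satisfy $\|K_W - K_U\|_\square \le \frac{2}{\varepsilon}\|W-U\|_\square$, where $\|\cdot\|_\square$ denotes the cut norm. -/
open MeasureTheory

noncomputable section

def I01 : Set ℝ := Set.Icc 0 1

def cutNorm (F : ℝ → ℝ → ℝ) : ℝ :=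
  sSup { c : ℝ | ∃ f g : ℝ → ℝ, Measurable f ∧ Measurable g ∧
    (∀ x, f x ∈ I01) ∧ (∀ x, g x ∈ I01) ∧
    c = |∫ x in I01, ∫ y in I01, F x y * f x * g y| }

def degree (W : ℝ → ℝ → ℝ) (x : ℝ) : ℝ := ∫ y in I01, W x y

def rwKernel (W : ℝ → ℝ → ℝ) (x y : ℝ) : ℝ :=
  if 0 < degree W x then W x y / degree W x else 0

lemma measuI01 : (volume.restrict I01) Set.univ = 1 := by
  simp [I01]

instance finI01 : IsFiniteMeasure (volume.restrict I01) :=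
  ⟨by rw [measuI01]; exact ENNReal.one_lt_top⟩

lemma integrable_bdd {φ : ℝ → ℝ} (hm : AEStronglyMeasurable φ (volume.restrict I01))
    {C : ℝ} (hb : ∀ x, |φ x| ≤ C) : Integrable φ (volume.restrict I01) :=
  Integrable.mono' (integrable_const C) hm (by
    filter_upwards with x using by simpa using hb x)

lemma abs_integral_le_one {φ : ℝ → ℝ} (hb : ∀ y, |φ y| ≤ 1) :
    |∫ y in I01, φ y| ≤ 1 := by
  have := norm_integral_le_of_norm_le_const (μ := volume.restrict I01) (f := φ) (C := 1)
    (by filter_upwards with y using by simpa using hb y)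
  rw [Real.norm_eq_abs] at this
  simpa [Measure.restrict_apply_univ, I01, Real.volume_Icc] using this

lemma slice_meas {W : ℝ → ℝ → ℝ} (hW : Measurable (Function.uncurry W)) (x : ℝ) :
    Measurable fun y => W x y := hW.comp measurable_prodMk_left

lemma degree_meas {W : ℝ → ℝ → ℝ} (hW : Measurable (Function.uncurry W)) :
    Measurable fun x => ∫ y in I01, W x y :=
  (hW.stronglyMeasurable.integral_prod_right (ν := volume.restrict I01)).measurable

lemma abs_le_one_of_mem {a : ℝ} (h : a ∈ I01) : |a| ≤ 1 := by
  simp only [I01, Set.mem_Icc] at h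
  exact abs_le.2 ⟨by linarith [h.1], h.2⟩

lemma prod3_bound {a b c : ℝ} (ha : |a| ≤ 1) (hb : b ∈ I01) (hc : c ∈ I01) :
    |a * b * c| ≤ 1 := by
  rw [abs_mul, abs_mul]
  have hb' := abs_le_one_of_mem hb
  have hc' := abs_le_one_of_mem hc
  have h1 : |a| * |b| ≤ 1 := mul_le_one₀ ha (abs_nonneg b) hb'
  exact mul_le_one₀ h1 (abs_nonneg c) hc'

lemma prod2_bound {a b : ℝ} (ha : a ∈ I01) (hb : b ∈ I01) : |a * b| ≤ 1 := by
  rw [abs_mul]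
  have ha' := abs_le_one_of_mem ha
  have hb' := abs_le_one_of_mem hb
  exact mul_le_one₀ ha' (abs_nonneg b) hb'

lemma cutNorm_bddAbove {F : ℝ → ℝ → ℝ} (hF : ∀ x y, |F x y| ≤ 1) :
    BddAbove { c : ℝ | ∃ f g : ℝ → ℝ, Measurable f ∧ Measurable g ∧
      (∀ x, f x ∈ I01) ∧ (∀ x, g x ∈ I01) ∧
      c = |∫ x in I01, ∫ y in I01, F x y * f x * g y| } := by
  refine ⟨1, ?_⟩
  rintro c ⟨f, g, hf, hg, hf01, hg01, rfl⟩
  exact abs_integral_le_one fun x => abs_integral_le_one fun y =>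
    prod3_bound (hF x y) (hf01 x) (hg01 y)

lemma le_cutNorm {F : ℝ → ℝ → ℝ} (hF : ∀ x y, |F x y| ≤ 1) {f g : ℝ → ℝ}
    (hf : Measurable f) (hg : Measurable g)
    (hf01 : ∀ x, f x ∈ I01) (hg01 : ∀ x, g x ∈ I01) :
    |∫ x in I01, ∫ y in I01, F x y * f x * g y| ≤ cutNorm F :=
  le_csSup (cutNorm_bddAbove hF) ⟨f, g, hf, hg, hf01, hg01, rfl⟩

lemma cutNorm_nonneg {F : ℝ → ℝ → ℝ} (hF : ∀ x y, |F x y| ≤ 1) : 0 ≤ cutNorm F := by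
  have h0 : (0:ℝ) ∈ I01 := ⟨le_refl 0, zero_le_one⟩
  have := le_csSup (cutNorm_bddAbove hF)
    (⟨fun _ => 0, fun _ => 0, measurable_const, measurable_const,
      fun _ => h0, fun _ => h0, by simp⟩ :
      (0:ℝ) ∈ { c : ℝ | ∃ f g : ℝ → ℝ, Measurable f ∧ Measurable g ∧
      (∀ x, f x ∈ I01) ∧ (∀ x, g x ∈ I01) ∧
      c = |∫ x in I01, ∫ y in I01, F x y * f x * g y| })
  exact this

theorem stmt1 (U W : ℝ → ℝ → ℝ)
    (hUmeas : Measurable (Function.uncurry U)) (hWmeas : Measurable (Function.uncurry W))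
    (hUsym : ∀ x y, U x y = U y x) (hWsym : ∀ x y, W x y = W y x)
    (hUrange : ∀ x y, U x y ∈ I01) (hWrange : ∀ x y, W x y ∈ I01)
    (ε : ℝ) (hε : 0 < ε)
    (hdW : ∀ᵐ x ∂(volume.restrict I01), ε < degree W x)
    (hdU : ∀ᵐ x ∂(volume.restrict I01), ε < degree U x) :
    cutNorm (fun x y => rwKernel W x y - rwKernel U x y)
      ≤ (2 / ε) * cutNorm (fun x y => W x y - U x y) := by
  have habs : ∀ x y, |W x y - U x y| ≤ 1 := by
    intro x y
    have h1 := hWrange x y; have h2 := hUrange x y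
    simp only [I01, Set.mem_Icc] at h1 h2
    exact abs_le.2 ⟨by linarith, by linarith⟩
  have hcn0 : 0 ≤ cutNorm (fun x y => W x y - U x y) := cutNorm_nonneg habs
  apply Real.sSup_le
  · rintro c ⟨f, g, hf, hg, hf01, hg01, rfl⟩
    -- slice integrability
    have hWg : ∀ x, Integrable (fun y => W x y * g y) (volume.restrict I01) := fun x =>
      integrable_bdd (((slice_meas hWmeas x).mul hg).aestronglyMeasurable)
        (fun y => prod2_bound (hWrange x y) (hg01 y))
    have hUg : ∀ x, Integrable (fun y => U x y * g y) (volume.restrict I01) := fun x =>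
      integrable_bdd (((slice_meas hUmeas x).mul hg).aestronglyMeasurable)
        (fun y => prod2_bound (hUrange x y) (hg01 y))
    have hW1 : ∀ x, Integrable (fun y => W x y) (volume.restrict I01) := fun x =>
      integrable_bdd ((slice_meas hWmeas x).aestronglyMeasurable)
        (fun y => abs_le_one_of_mem (hWrange x y))
    have hU1 : ∀ x, Integrable (fun y => U x y) (volume.restrict I01) := fun x =>
      integrable_bdd ((slice_meas hUmeas x).aestronglyMeasurable)
        (fun y => abs_le_one_of_mem (hUrange x y))
    have hdWm : Measurable fun x => degree W x := degree_meas hWmeas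
    have hdUm : Measurable fun x => degree U x := degree_meas hUmeas
    have hAUm : Measurable fun x => ∫ y in I01, U x y * g y :=
      degree_meas (show Measurable (Function.uncurry fun x y => U x y * g y) from
        hUmeas.mul (hg.comp measurable_snd))
    -- the two test functions
    set f₁ : ℝ → ℝ := fun x => if ε < degree W x then ε * f x / degree W x else 0 with hf₁def
    set h : ℝ → ℝ := fun x => if ε < degree W x ∧ ε < degree U x then
        ε * f x * (∫ y in I01, U x y * g y) / (degree W x * degree U x) else 0 with hhdef
    have hf₁m : Measurable f₁ :=
      Measurable.ite (measurableSet_lt measurable_const hdWm)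
        ((measurable_const.mul hf).div hdWm) measurable_const
    have hhm : Measurable h :=
      Measurable.ite ((measurableSet_lt measurable_const hdWm).inter
          (measurableSet_lt measurable_const hdUm))
        (((measurable_const.mul hf).mul hAUm).div (hdWm.mul hdUm)) measurable_const
    have hf₁01 : ∀ x, f₁ x ∈ I01 := by
      intro x
      rw [hf₁def]
      simp only
      split_ifs with hx
      · have hd : 0 < degree W x := hε.trans hx
        have hf0 := (hf01 x).1
        have hf1 := (hf01 x).2
        constructor
        · positivity
        · rw [div_le_one hd]; nlinarith
      · exact ⟨le_refl 0, zero_le_one⟩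
    have hh01 : ∀ x, h x ∈ I01 := by
      intro x
      rw [hhdef]
      simp only
      split_ifs with hx
      · obtain ⟨hxW, hxU⟩ := hx
        have hdW0 : 0 < degree W x := hε.trans hxW
        have hdU0 : 0 < degree U x := hε.trans hxU
        have hf0 := (hf01 x).1
        have hf1 := (hf01 x).2
        have hAU0 : 0 ≤ ∫ y in I01, U x y * g y :=
          integral_nonneg fun y => mul_nonneg (hUrange x y).1 (hg01 y).1
        have hAUle : (∫ y in I01, U x y * g y) ≤ degree U x := by
          rw [degree]
          exact integral_mono (hUg x) (hU1 x) fun y =>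
            mul_le_of_le_one_right (hUrange x y).1 (hg01 y).2
        constructor
        · positivity
        · rw [div_le_one (by positivity)]
          have s1 : ε * f x ≤ degree W x := by nlinarith
          have s2 : ε * f x * (∫ y in I01, U x y * g y)
              ≤ degree W x * (∫ y in I01, U x y * g y) :=
            mul_le_mul_of_nonneg_right s1 hAU0
          have s3 : degree W x * (∫ y in I01, U x y * g y)
              ≤ degree W x * degree U x :=
            mul_le_mul_of_nonneg_left hAUle hdW0.le
          linarith
      · exact ⟨le_refl 0, zero_le_one⟩
    have h1mem : ∀ x : ℝ, (fun _ : ℝ => (1:ℝ)) x ∈ I01 := fun _ => ⟨zero_le_one, le_refl 1⟩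
    -- key a.e. pointwise identity of inner integrals
    have hae : ∀ᵐ x ∂(volume.restrict I01),
        (∫ y in I01, (rwKernel W x y - rwKernel U x y) * f x * g y)
          = (1/ε) * ((∫ y in I01, (W x y - U x y) * f₁ x * g y)
            + (∫ y in I01, (U x y - W x y) * h x * 1)) := by
      filter_upwards [hdW, hdU] with x hxW hxU
      have hdW0 : 0 < degree W x := hε.trans hxW
      have hdU0 : 0 < degree U x := hε.trans hxU
      have e1 : (∫ y in I01, (rwKernel W x y - rwKernel U x y) * f x * g y)
          = (f x / degree W x) * (∫ y in I01, W x y * g y)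
            - (f x / degree U x) * (∫ y in I01, U x y * g y) := by
        calc (∫ y in I01, (rwKernel W x y - rwKernel U x y) * f x * g y)
            = ∫ y in I01, ((f x / degree W x) * (W x y * g y)
              - (f x / degree U x) * (U x y * g y)) := by
              refine integral_congr_ae (Filter.Eventually.of_forall fun y => ?_)
              simp only [rwKernel]
              rw [if_pos hdW0, if_pos hdU0]
              ring
          _ = _ := by
              rw [integral_sub ((hWg x).const_mul _) ((hUg x).const_mul _),
                integral_const_mul, integral_const_mul]
      have e2 : (∫ y in I01, (W x y - U x y) * f₁ x * g y)
          = f₁ x * ((∫ y in I01, W x y * g y) - (∫ y in I01, U x y * g y)) := by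
        calc (∫ y in I01, (W x y - U x y) * f₁ x * g y)
            = ∫ y in I01, (f₁ x * (W x y * g y) - f₁ x * (U x y * g y)) := by
              refine integral_congr_ae (Filter.Eventually.of_forall fun y => ?_)
              ring
          _ = _ := by
              rw [integral_sub ((hWg x).const_mul _) ((hUg x).const_mul _),
                integral_const_mul, integral_const_mul]
              ring
      have e3 : (∫ y in I01, (U x y - W x y) * h x * 1)
          = h x * (degree U x - degree W x) := by
        calc (∫ y in I01, (U x y - W x y) * h x * 1)
            = ∫ y in I01, (h x * U x y - h x * W x y) := by
              refine integral_congr_ae (Filter.Eventually.of_forall fun y => ?_)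
              ring
          _ = _ := by
              rw [integral_sub ((hU1 x).const_mul _) ((hW1 x).const_mul _),
                integral_const_mul, integral_const_mul]
              simp only [degree]
              ring
      rw [e1, e2, e3, hf₁def, hhdef]
      simp only
      rw [if_pos hxW, if_pos ⟨hxW, hxU⟩]
      have hε' : ε ≠ 0 := ne_of_gt hε
      have h1 : degree W x ≠ 0 := ne_of_gt hdW0
      have h2 : degree U x ≠ 0 := ne_of_gt hdU0
      field_simp
      ring
    -- integrability of the two inner-integral functions
    have hQint : Integrable (fun x => ∫ y in I01, (W x y - U x y) * f₁ x * g y)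
        (volume.restrict I01) := by
      refine integrable_bdd ?_ (C := 1) ?_
      · refine (Measurable.aestronglyMeasurable ?_)
        exact (degree_meas (show Measurable (Function.uncurry
            fun x y => (W x y - U x y) * f₁ x * g y) from
          ((hWmeas.sub hUmeas).mul (hf₁m.comp measurable_fst)).mul (hg.comp measurable_snd)))
      · intro x
        exact abs_integral_le_one fun y => prod3_bound (habs x y) (hf₁01 x) (hg01 y)
    have hRint : Integrable (fun x => ∫ y in I01, (U x y - W x y) * h x * 1)
        (volume.restrict I01) := by
      refine integrable_bdd ?_ (C := 1) ?_
      · refine (Measurable.aestronglyMeasurable ?_)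
        exact (degree_meas (show Measurable (Function.uncurry
            fun x y => (U x y - W x y) * h x * 1) from
          (((hUmeas.sub hWmeas).mul (hhm.comp measurable_fst)).mul measurable_const)))
      · intro x
        have habs' : ∀ x y, |U x y - W x y| ≤ 1 := fun x y => by
          rw [abs_sub_comm]; exact habs x y
        exact abs_integral_le_one fun y => prod3_bound (habs' x y) (hh01 x) (h1mem y)
    -- key integral identity
    have key : (∫ x in I01, ∫ y in I01, (rwKernel W x y - rwKernel U x y) * f x * g y)
        = (1/ε) * ((∫ x in I01, ∫ y in I01, (W x y - U x y) * f₁ x * g y)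
          + (∫ x in I01, ∫ y in I01, (U x y - W x y) * h x * 1)) := by
      rw [integral_congr_ae hae, integral_const_mul, integral_add hQint hRint]
    have hIQ : |∫ x in I01, ∫ y in I01, (W x y - U x y) * f₁ x * g y|
        ≤ cutNorm (fun x y => W x y - U x y) :=
      le_cutNorm habs hf₁m hg hf₁01 hg01
    have hIRval : (∫ x in I01, ∫ y in I01, (U x y - W x y) * h x * 1)
        = -(∫ x in I01, ∫ y in I01, (W x y - U x y) * h x * 1) := by
      rw [← integral_neg]
      refine integral_congr_ae (Filter.Eventually.of_forall fun x => ?_)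
      show (∫ y in I01, (U x y - W x y) * h x * 1)
          = -∫ y in I01, (W x y - U x y) * h x * 1
      rw [← integral_neg]
      refine integral_congr_ae (Filter.Eventually.of_forall fun y => ?_)
      show (U x y - W x y) * h x * 1 = -((W x y - U x y) * h x * 1)
      ring
    have hIR : |∫ x in I01, ∫ y in I01, (U x y - W x y) * h x * 1|
        ≤ cutNorm (fun x y => W x y - U x y) := by
      rw [hIRval, abs_neg]
      exact le_cutNorm habs hhm measurable_const hh01 h1mem
    show |∫ x in I01, ∫ y in I01, (rwKernel W x y - rwKernel U x y) * f x * g y|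
        ≤ 2 / ε * cutNorm (fun x y => W x y - U x y)
    rw [key]
    have hε1 : 0 < 1/ε := by positivity
    calc |(1/ε) * ((∫ x in I01, ∫ y in I01, (W x y - U x y) * f₁ x * g y)
          + (∫ x in I01, ∫ y in I01, (U x y - W x y) * h x * 1))|
        = (1/ε) * |(∫ x in I01, ∫ y in I01, (W x y - U x y) * f₁ x * g y)
          + (∫ x in I01, ∫ y in I01, (U x y - W x y) * h x * 1)| := by
          rw [abs_mul, abs_of_pos hε1]
      _ ≤ (1/ε) * (|∫ x in I01, ∫ y in I01, (W x y - U x y) * f₁ x * g y|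
          + |∫ x in I01, ∫ y in I01, (U x y - W x y) * h x * 1|) := by
          gcongr
          exact abs_add_le _ _
      _ ≤ (1/ε) * (cutNorm (fun x y => W x y - U x y) + cutNorm (fun x y => W x y - U x y)) := by
          gcongr
      _ = 2 / ε * cutNorm (fun x y => W x y - U x y) := by ring
  · exact mul_nonneg (by positivity) hcn0
end
end

section
/- Let $U,W:[0,1]^2\to[0,1]$ be graphons with degree functions bounded below a.e. by $\varepsilon>0$. Then for any measurable functions $f,g:[0,1]\to[0,1]$, the term $\big|\int_{[0,1]^2}\big(\frac{1}{d_W(x)}-\frac{1}{d_U(x)}\big)U(x,y)f(x)g(y)\,dx\,dy\big| \le \frac{1}{\varepsilon}\|W-U\|_\square$. -/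
open MeasureTheory

noncomputable section

/-!
Since `1/d_W - 1/d_U = (d_U - d_W)/(d_W d_U)` and `0 ≤ f(x) ∫ U(x,y) g(y) dy ≤ d_U(x)`, the integral
equals `-(1/ε) ∫ ψ(x) (d_W(x) - d_U(x)) dx` with `ψ = ε f (∫ U g) / (d_W d_U)`, and `ε < d_W` puts
`ψ` in `[0,1]`. The last integral is `∫∫ (W - U)(x,y) ψ(x) · 1`, one of the quantities whose
supremum is the cut norm.
-/

lemma volume_I01 : volume I01 = 1 := by simp [I01]

lemma volume_real_I01 : volume.real I01 = 1 := by simp [measureReal_def, volume_I01]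

lemma integrableOn_I01_of_abs_le {h : ℝ → ℝ} (hm : Measurable h) {C : ℝ} (hC : ∀ y, |h y| ≤ C) :
    IntegrableOn h I01 :=
  Measure.integrableOn_of_bounded (by simp [volume_I01]) hm.aestronglyMeasurable
    (M := C) (.of_forall hC)

lemma abs_setIntegral_I01_le {h : ℝ → ℝ} {C : ℝ} (hC : ∀ y ∈ I01, |h y| ≤ C) :
    |∫ y in I01, h y| ≤ C := by
  simpa [volume_real_I01] using
    norm_setIntegral_le_of_norm_le_const (μ := volume) (s := I01) (f := h) (by simp [volume_I01]) hC

lemma abs_le_one_of_mem_I01 {t : ℝ} (ht : t ∈ I01) : |t| ≤ 1 := by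
  rw [abs_of_nonneg ht.1]; exact ht.2

lemma abs_mul_mul_le_of_mem_I01 {a s t C : ℝ} (ha : |a| ≤ C) (hs : s ∈ I01) (ht : t ∈ I01) :
    |a * s * t| ≤ C := by
  rw [abs_mul, abs_mul]
  calc |a| * |s| * |t| ≤ |a| * |s| :=
        mul_le_of_le_one_right (by positivity) (abs_le_one_of_mem_I01 ht)
    _ ≤ |a| := mul_le_of_le_one_right (abs_nonneg _) (abs_le_one_of_mem_I01 hs)
    _ ≤ C := ha

lemma measurable_degree {W : ℝ → ℝ → ℝ} (hW : Measurable (Function.uncurry W)) :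
    Measurable (degree W) :=
  hW.stronglyMeasurable.integral_prod_right'.measurable

lemma abs_integral_le_cutNorm {F : ℝ → ℝ → ℝ} {C : ℝ} (hF : ∀ x y, |F x y| ≤ C)
    {f g : ℝ → ℝ} (hf : Measurable f) (hg : Measurable g)
    (hfr : ∀ x, f x ∈ I01) (hgr : ∀ x, g x ∈ I01) :
    |∫ x in I01, ∫ y in I01, F x y * f x * g y| ≤ cutNorm F := by
  refine le_csSup ⟨C, ?_⟩ ⟨f, g, hf, hg, hfr, hgr, rfl⟩
  rintro c ⟨f', g', -, -, hf'r, hg'r, rfl⟩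
  exact abs_setIntegral_I01_le fun x _ => abs_setIntegral_I01_le fun y _ =>
    abs_mul_mul_le_of_mem_I01 (hF x y) (hf'r x) (hg'r y)

lemma integrableOn_row {U : ℝ → ℝ → ℝ} (hU : Measurable (Function.uncurry U)) {C : ℝ}
    (hC : ∀ x y, |U x y| ≤ C) (x : ℝ) : IntegrableOn (U x) I01 :=
  integrableOn_I01_of_abs_le hU.of_uncurry_left (hC x)

lemma abs_sub_le_one_of_mem_I01 {s t : ℝ} (hs : s ∈ I01) (ht : t ∈ I01) : |s - t| ≤ 1 :=
  abs_sub_le_of_nonneg_of_le hs.1 hs.2 ht.1 ht.2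

lemma abs_integral_mul_degree_sub_le_cutNorm {U W : ℝ → ℝ → ℝ}
    (hUmeas : Measurable (Function.uncurry U)) (hWmeas : Measurable (Function.uncurry W))
    (hUrange : ∀ x y, U x y ∈ I01) (hWrange : ∀ x y, W x y ∈ I01)
    {ψ : ℝ → ℝ} (hψ : Measurable ψ) (hψr : ∀ x, ψ x ∈ I01) :
    |∫ x in I01, ψ x * (degree W x - degree U x)| ≤ cutNorm (fun x y => W x y - U x y) := by
  have hrow : ∀ x, ψ x * (degree W x - degree U x)
      = ∫ y in I01, (W x y - U x y) * ψ x * 1 := fun x => by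
    simp_rw [mul_one, integral_mul_const,
      integral_sub (integrableOn_row hWmeas (fun x y => abs_le_one_of_mem_I01 (hWrange x y)) x)
        (integrableOn_row hUmeas (fun x y => abs_le_one_of_mem_I01 (hUrange x y)) x)]
    rw [mul_comm]; rfl
  simp_rw [hrow]
  exact abs_integral_le_cutNorm (fun x y => abs_sub_le_one_of_mem_I01 (hWrange x y) (hUrange x y))
    hψ measurable_const hψr fun _ => ⟨zero_le_one, le_rfl⟩

lemma degree_mul_mem_Icc {U : ℝ → ℝ → ℝ} (hUmeas : Measurable (Function.uncurry U))
    (hUrange : ∀ x y, U x y ∈ I01) {g : ℝ → ℝ} (hg : Measurable g) (hgr : ∀ y, g y ∈ I01)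
    (x : ℝ) : degree (fun x y => U x y * g y) x ∈ Set.Icc 0 (degree U x) := by
  have hU1 : ∀ x y, |U x y| ≤ 1 := fun x y => abs_le_one_of_mem_I01 (hUrange x y)
  refine ⟨setIntegral_nonneg measurableSet_Icc fun y _ =>
      mul_nonneg (hUrange x y).1 (hgr y).1, ?_⟩
  have hUg : IntegrableOn (fun y => U x y * g y) I01 :=
    integrableOn_I01_of_abs_le (hUmeas.of_uncurry_left.mul hg) fun y => by
      rw [abs_mul]; exact mul_le_one₀ (hU1 x y) (abs_nonneg _) (abs_le_one_of_mem_I01 (hgr y))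
  refine setIntegral_mono hUg (integrableOn_row hUmeas hU1 x) fun y => ?_
  exact mul_le_of_le_one_right (hUrange x y).1 (hgr y).2

lemma div_mul_mem_I01 {ε a b t : ℝ} (hε : 0 ≤ ε) (ha : ε ≤ a) (ht : 0 ≤ t) (htb : t ≤ b) :
    ε * t / (a * b) ∈ I01 := by
  have hab : 0 ≤ a * b := mul_nonneg (hε.trans ha) (ht.trans htb)
  exact ⟨div_nonneg (mul_nonneg hε ht) hab,
    div_le_one_of_le₀ (mul_le_mul ha htb ht (hε.trans ha)) hab⟩

lemma inv_sub_inv_mul_eq {ε a b t : ℝ} (hε : ε ≠ 0) (ha : a ≠ 0) (ht : 0 ≤ t) (htb : t ≤ b) :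
    (1 / a - 1 / b) * t = -(1 / ε) * (ε * t / (a * b) * (a - b)) := by
  -- for `b = 0` both sides vanish, via `t = 0` and `1 / 0 = 0`
  rcases (ht.trans htb).eq_or_lt with rfl | hb
  · obtain rfl : t = 0 := le_antisymm htb ht
    simp
  · field_simp
    ring

theorem stmt2_general (U W : ℝ → ℝ → ℝ)
    (hUmeas : Measurable (Function.uncurry U)) (hWmeas : Measurable (Function.uncurry W))
    (hUrange : ∀ x y, U x y ∈ I01) (hWrange : ∀ x y, W x y ∈ I01)
    (ε : ℝ) (hε : 0 < ε)
    (hdW : ∀ᵐ x ∂(volume.restrict I01), ε < degree W x)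
    (f g : ℝ → ℝ) (hf : Measurable f) (hg : Measurable g)
    (hfr : ∀ x, f x ∈ I01) (hgr : ∀ x, g x ∈ I01) :
    |∫ x in I01, ∫ y in I01,
        (1 / degree W x - 1 / degree U x) * U x y * f x * g y|
      ≤ (1 / ε) * cutNorm (fun x y => W x y - U x y) := by
  set G := degree (fun x y => U x y * g y)
  have hfG : ∀ x, 0 ≤ f x * G x ∧ f x * G x ≤ degree U x := fun x => by
    obtain ⟨hG0, hGU⟩ := degree_mul_mem_Icc hUmeas hUrange hg hgr x
    exact ⟨mul_nonneg (hfr x).1 hG0, (mul_le_of_le_one_left hG0 (hfr x).2).trans hGU⟩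
  have hGmeas : Measurable G :=
    measurable_degree (W := fun x y => U x y * g y) (hUmeas.mul (hg.comp measurable_snd))
  -- the clamp only acts off the full-measure set `ε < d_W`, and makes `ψ` a valid test function
  set ψ : ℝ → ℝ := fun x => max 0 (min 1 (ε * (f x * G x) / (degree W x * degree U x)))
  have hψ : Measurable ψ := measurable_const.max <| measurable_const.min <|
    (measurable_const.mul (hf.mul hGmeas)).div
      ((measurable_degree hWmeas).mul (measurable_degree hUmeas))
  have hψr : ∀ x, ψ x ∈ I01 := fun x => ⟨le_max_left _ _, max_le zero_le_one (min_le_left _ _)⟩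
  have hrow : ∀ᵐ x ∂(volume.restrict I01),
      ∫ y in I01, (1 / degree W x - 1 / degree U x) * U x y * f x * g y
        = -(1 / ε) * (ψ x * (degree W x - degree U x)) := by
    filter_upwards [hdW] with x hx
    have hψx : ψ x = ε * (f x * G x) / (degree W x * degree U x) := by
      obtain ⟨h0, h1⟩ := div_mul_mem_I01 hε.le hx.le (hfG x).1 (hfG x).2
      simp only [ψ, min_eq_right h1, max_eq_right h0]
    rw [hψx, ← inv_sub_inv_mul_eq hε.ne' (hε.trans hx).ne' (hfG x).1 (hfG x).2]
    simp only [G, degree, ← integral_const_mul]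
    congr 1 with y
    ring
  rw [integral_congr_ae hrow, integral_const_mul, abs_mul, abs_neg, abs_of_pos (one_div_pos.2 hε)]
  exact mul_le_mul_of_nonneg_left
    (abs_integral_mul_degree_sub_le_cutNorm hUmeas hWmeas hUrange hWrange hψ hψr)
    (one_div_pos.2 hε).le

theorem stmt2 (U W : ℝ → ℝ → ℝ)
    (hUmeas : Measurable (Function.uncurry U)) (hWmeas : Measurable (Function.uncurry W))
    (hUsym : ∀ x y, U x y = U y x) (hWsym : ∀ x y, W x y = W y x)
    (hUrange : ∀ x y, U x y ∈ I01) (hWrange : ∀ x y, W x y ∈ I01)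
    (ε : ℝ) (hε : 0 < ε)
    (hdW : ∀ᵐ x ∂(volume.restrict I01), ε < degree W x)
    (hdU : ∀ᵐ x ∂(volume.restrict I01), ε < degree U x)
    (f g : ℝ → ℝ) (hf : Measurable f) (hg : Measurable g)
    (hfr : ∀ x, f x ∈ I01) (hgr : ∀ x, g x ∈ I01) :
    |∫ x in I01, ∫ y in I01,
        (1 / degree W x - 1 / degree U x) * U x y * f x * g y|
      ≤ (1 / ε) * cutNorm (fun x y => W x y - U x y) :=
  stmt2_general U W hUmeas hWmeas hUrange hWrange ε hε hdW f g hf hg hfr hgr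
end
end

section
/- Let $F$ be a finite simple graph and $H$ an $(r+2)$-uniform hypergraph on $N$ vertices, $r\ge 0$. Let $F_r$ be the $r$-subdivision of $F$ and $G[H]$ the codegree-section weighted graph of $H$ with edge weights $w(\{u,v\})=N^{-r}\,\mathrm{codeg}_H(u,v)$. Then $\hom(F_r,H)=(r!\,N^r)^{|E(F)|}\hom(F,G[H])$, where $\hom(F,G[H])=\sum_{\varphi:V(F)\to V(H)}\prod_{\{u,v\}\in E(F)} w(\{\varphi(u),\varphi(v)\})$. -/
/-!
A homomorphism `F_r → H` is a map `φ : V(F) → V(H)` together with, for every edge `uv` of `F`,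
an `r`-tuple `h` of vertices of `H` such that `{φ u, φ v} ∪ image h` is an edge of `H`, and these
tuples are chosen independently for different edges. If `φ u ≠ φ v`, each edge of `H` through
`{φ u, φ v}` arises from exactly `r!` tuples (the orderings of its other `r` vertices), giving
`r! · codeg(φ u, φ v)` choices; if `φ u = φ v`, at most `r + 1` vertices are covered, so there
are none. Multiplying over the edges of `F` and summing over `φ` gives the identity.
-/

open MeasureTheory

noncomputable section

/-- Number of hypergraph homomorphisms: maps sending every edge of `EF` onto an edge of `EH`. -/
def homCountHyper {A B : Type*} [DecidableEq B] (EF : Finset (Finset A))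
    (EH : Finset (Finset B)) : ℕ :=
  Nat.card {φ : A → B // ∀ e ∈ EF, e.image φ ∈ EH}

/-- Number of edges of `EH` containing the vertex set `s`. -/
def codegS {B : Type*} [DecidableEq B] (EH : Finset (Finset B)) (s : Finset B) : ℕ :=
  (EH.filter fun e => s ⊆ e).card

/-- The internal vertices attached to the edge `e` in the `r`-subdivision. -/
def internal {V : Type*} [Fintype V] [DecidableEq V] (F : SimpleGraph V)
    [DecidableRel F.Adj] (r : ℕ) (e : {e : Sym2 V // e ∈ F.edgeFinset}) :
    Finset (V ⊕ ({e : Sym2 V // e ∈ F.edgeFinset} × Fin r)) :=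
  Finset.univ.image fun i : Fin r => Sum.inr (e, i)

/-- The hyperedge of the `r`-subdivision corresponding to the edge `e` of `F`. -/
def subdivEdge {V : Type*} [Fintype V] [DecidableEq V] (F : SimpleGraph V)
    [DecidableRel F.Adj] (r : ℕ) (e : {e : Sym2 V // e ∈ F.edgeFinset}) :
    Finset (V ⊕ ({e : Sym2 V // e ∈ F.edgeFinset} × Fin r)) :=
  ((Finset.univ.filter fun v : V => v ∈ (e : Sym2 V)).image Sum.inl) ∪ internal F r e

/-- The edge set of the `r`-subdivision of `F`. -/
def subdivEdges {V : Type*} [Fintype V] [DecidableEq V] (F : SimpleGraph V)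
    [DecidableRel F.Adj] (r : ℕ) :
    Finset (Finset (V ⊕ ({e : Sym2 V // e ∈ F.edgeFinset} × Fin r))) :=
  F.edgeFinset.attach.image (subdivEdge F r)

/-- Weighted homomorphism count of `F` into the codegree-section weighted graph `G[H]`,
with edge weights `N^(-r) * codeg` (and weight `0` on loops). -/
def homCountCodeg {V : Type*} [Fintype V] [DecidableEq V] (F : SimpleGraph V)
    [DecidableRel F.Adj] (N r : ℕ) (EH : Finset (Finset (Fin N))) : ℝ :=
  ∑ φ : V → Fin N, ∏ e ∈ F.edgeFinset.attach,
    (let s := (Finset.univ.filter fun v : V => v ∈ (e : Sym2 V)).image φ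
     if s.card = 2 then ((N : ℝ) ^ r)⁻¹ * (codegS EH s : ℝ) else 0)

open Finset

section Counting

variable {ι α : Type*} [Fintype ι] [DecidableEq ι] [Fintype α] [DecidableEq α]

lemma card_filter_image_univ_eq_factorial (t : Finset α) (ht : #t = Fintype.card ι) :
    #{h : ι → α | univ.image h = t} = (Fintype.card ι).factorial := by
  have hbij (h : {h : ι → α // univ.image h = t}) :
      Function.Bijective fun i => (⟨h.1 i, h.2.subset (mem_image_of_mem _ (mem_univ i))⟩ : t) := by
    refine (Fintype.bijective_iff_injective_and_card _).2 ⟨fun i j hij => ?_, by simp [ht]⟩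
    have hinj : Set.InjOn h.1 (univ : Finset ι) :=
      card_image_iff.1 (by rw [h.2, ht, card_univ])
    exact hinj (by simp) (by simp) (congrArg Subtype.val hij)
  let e : {h : ι → α // univ.image h = t} ≃ (ι ≃ t) :=
    { toFun h := .ofBijective _ (hbij h)
      invFun g := ⟨fun i => g i, by
        ext x
        simp only [mem_image, mem_univ, true_and]
        exact ⟨by rintro ⟨i, rfl⟩; exact (g i).2, fun hx => ⟨g.symm ⟨x, hx⟩, by simp⟩⟩⟩
      left_inv _ := rfl
      right_inv _ := by ext; rfl }
  rw [← Fintype.card_subtype, Fintype.card_congr e,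
    Fintype.card_equiv (Fintype.equivOfCardEq (by simp [ht]))]

variable {EH : Finset (Finset α)} {s : Finset α}

lemma card_filter_union_image_mem_eq_factorial_mul_codegS
    (hunif : ∀ e ∈ EH, #e = #s + Fintype.card ι) :
    #{h : ι → α | s ∪ univ.image h ∈ EH} = (Fintype.card ι).factorial * codegS EH s := by
  have hmaps : Set.MapsTo (fun h : ι → α => s ∪ univ.image h)
      ({h : ι → α | s ∪ univ.image h ∈ EH} : Finset _) (EH.filter (s ⊆ ·)) := by
    intro h hh
    simp only [coe_filter, mem_univ, true_and] at hh ⊢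
    exact ⟨hh, subset_union_left⟩
  have hfibre : ∀ f ∈ EH.filter (s ⊆ ·),
      #{h ∈ ({h : ι → α | s ∪ univ.image h ∈ EH} : Finset _) | s ∪ univ.image h = f}
        = (Fintype.card ι).factorial := by
    intro f hf
    obtain ⟨hfEH, hsf⟩ := mem_filter.1 hf
    have hcard : #(f \ s) = Fintype.card ι := by
      rw [card_sdiff_of_subset hsf, hunif f hfEH]; omega
    -- `s ∪ image h = f` forces `image h ⊇ f \ s`, and `#(image h) ≤ #(f \ s)` gives equality.
    have hiff : ∀ h : ι → α, s ∪ univ.image h = f ↔ univ.image h = f \ s := by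
      intro h
      refine ⟨fun hu => (eq_of_subset_of_card_le (fun x hx => ?_) ?_).symm, fun hi => ?_⟩
      · obtain ⟨hxf, hxs⟩ := mem_sdiff.1 hx
        exact (mem_union.1 (hu ▸ hxf)).resolve_left hxs
      · exact hcard ▸ card_image_le.trans (card_univ (α := ι)).le
      · rw [hi, union_sdiff_of_subset hsf]
    rw [← card_filter_image_univ_eq_factorial _ hcard]
    congr 1
    ext h
    simp only [mem_filter, mem_univ, true_and, ← hiff]
    exact ⟨And.right, fun hu => ⟨hu ▸ hfEH, hu⟩⟩
  rw [card_eq_sum_card_fiberwise hmaps, sum_congr rfl hfibre, sum_const, smul_eq_mul,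
    mul_comm, codegS]

lemma card_filter_union_image_mem_eq_zero (hunif : ∀ e ∈ EH, #s + Fintype.card ι < #e) :
    #{h : ι → α | s ∪ univ.image h ∈ EH} = 0 := by
  refine card_eq_zero.2 (filter_eq_empty_iff.2 fun h _ hh => ?_)
  have hunion := card_union_le s (univ.image h)
  have himage := (card_image_le (s := univ) (f := h)).trans (card_univ (α := ι)).le
  have hedge := hunif _ hh
  omega

end Counting

section Subdivision

variable {V B : Type*} [Fintype V] [DecidableEq V] {F : SimpleGraph V} [DecidableRel F.Adj]
  {r : ℕ} [DecidableEq B]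

lemma image_subdivEdge (φ : V ⊕ (F.edgeFinset × Fin r) → B) (e : F.edgeFinset) :
    (subdivEdge F r e).image φ
      = (univ.filter (· ∈ (e : Sym2 V))).image (φ ∘ Sum.inl)
          ∪ univ.image fun i => φ (.inr (e, i)) := by
  rw [subdivEdge, internal, image_union, image_image, image_image]
  rfl

lemma homCountHyper_subdivEdges [Fintype B] (EH : Finset (Finset B)) :
    homCountHyper (subdivEdges F r) EH = ∑ φ : V → B, ∏ e : F.edgeFinset,
      #{h : Fin r → B | (univ.filter (· ∈ (e : Sym2 V))).image φ ∪ univ.image h ∈ EH} := by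
  let split : (V ⊕ (F.edgeFinset × Fin r) → B) ≃ (V → B) × (F.edgeFinset → Fin r → B) :=
    (Equiv.sumArrowEquivProdArrow _ _ _).trans (.prodCongr (.refl _) (Equiv.curry _ _ _))
  have hsplit : {φ // ∀ f ∈ subdivEdges F r, f.image φ ∈ EH} ≃
      Σ φ : V → B, ∀ e : F.edgeFinset,
        {h : Fin r → B // (univ.filter (· ∈ (e : Sym2 V))).image φ ∪ univ.image h ∈ EH} :=
    (split.subtypeEquiv fun φ => by
      simp only [subdivEdges, forall_mem_image, mem_attach, forall_const, image_subdivEdge]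
      rfl).trans
      ((Equiv.subtypeProdEquivSigmaSubtype _).trans (.sigmaCongrRight fun _ => .subtypePiEquivPi))
  rw [homCountHyper, Nat.card_congr hsplit, Nat.card_sigma]
  simp only [Nat.card_eq_fintype_card, Fintype.card_pi, Fintype.card_subtype]

end Subdivision

lemma card_filter_mem_sym2_le_two {V : Type*} [Fintype V] [DecidableEq V] (z : Sym2 V) :
    #{v | v ∈ z} ≤ 2 := by
  have : ({v | v ∈ z} : Finset V) = z.toFinset := by ext; simp
  rw [this, Sym2.card_toFinset]
  split_ifs <;> omega

def codegWeight {N : ℕ} (r : ℕ) (EH : Finset (Finset (Fin N))) (s : Finset (Fin N)) : ℝ :=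
  if #s = 2 then ((N : ℝ) ^ r)⁻¹ * codegS EH s else 0

lemma homCountCodeg_eq_sum_prod_codegWeight {V : Type*} [Fintype V] [DecidableEq V]
    (F : SimpleGraph V) [DecidableRel F.Adj] (N r : ℕ) (EH : Finset (Finset (Fin N))) :
    homCountCodeg F N r EH
      = ∑ φ : V → Fin N, ∏ e : F.edgeFinset,
          codegWeight r EH ((univ.filter (· ∈ (e : Sym2 V))).image φ) := by
  rw [homCountCodeg, univ_eq_attach]
  rfl

lemma card_filter_union_image_mem_eq_codegWeight {N r : ℕ} {EH : Finset (Finset (Fin N))}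
    (hunif : ∀ e ∈ EH, #e = r + 2) {s : Finset (Fin N)} (hs : #s ≤ 2) :
    (#{h : Fin r → Fin N | s ∪ univ.image h ∈ EH} : ℝ)
      = r.factorial * (N : ℝ) ^ r * codegWeight r EH s := by
  rw [codegWeight]
  split_ifs with h2
  · have hN : (N : ℝ) ^ r ≠ 0 := by
      have := card_le_univ s
      simp only [Fintype.card_fin] at this
      exact pow_ne_zero _ (Nat.cast_ne_zero.2 (by omega))
    rw [card_filter_union_image_mem_eq_factorial_mul_codegS fun e he => by
      rw [hunif e he, h2, Fintype.card_fin, add_comm]]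
    push_cast [Fintype.card_fin]
    field_simp
  · rw [card_filter_union_image_mem_eq_zero fun e he => by
      rw [hunif e he, Fintype.card_fin]; omega]
    simp

theorem stmt6 {V : Type*} [Fintype V] [DecidableEq V] (F : SimpleGraph V)
    [DecidableRel F.Adj] (r N : ℕ)
    (EH : Finset (Finset (Fin N))) (hunif : ∀ e ∈ EH, e.card = r + 2) :
    (homCountHyper (subdivEdges F r) EH : ℝ)
      = ((Nat.factorial r * N ^ r : ℕ) : ℝ) ^ F.edgeFinset.card
        * homCountCodeg F N r EH := by
  rw [homCountHyper_subdivEdges, homCountCodeg_eq_sum_prod_codegWeight, mul_sum]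
  push_cast
  refine sum_congr rfl fun φ _ => ?_
  rw [← card_attach, ← univ_eq_attach, pow_card_mul_prod]
  exact prod_congr rfl fun e _ => card_filter_union_image_mem_eq_codegWeight hunif
    (card_image_le.trans (card_filter_mem_sym2_le_two (e : Sym2 V)))
end
end

section
/- Let $F$ be a finite simple graph, $r\ge 1$, and $H$ an $(r+1)$-uniform hypergraph with adjacency tensor $A$. Let $F^{(r)}$ denote the $r$-intersection pattern hypergraph of $F$ and $B[H]$ the vertex-vertex intersection graph of $H$, with adjacency matrix $B_{uv}=\frac{1}{r!}\sum_{i_1,\ldots,i_r} A_{u,i_1,\ldots,i_r}A_{i_1,\ldots,i_r,v}$. Then $\hom(F^{(r)},H)=(r!)^{|E(F)|}\hom(F,B[H])$. -/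
open MeasureTheory

noncomputable section

/-- The edge set of the `r`-intersection pattern hypergraph of `F`: each edge `e = {u,v}`
of `F` yields the two hyperedges `{u, w_{e,1},…,w_{e,r}}` and `{v, w_{e,1},…,w_{e,r}}`. -/
def interEdges {V : Type*} [Fintype V] [DecidableEq V] (F : SimpleGraph V)
    [DecidableRel F.Adj] (r : ℕ) :
    Finset (Finset (V ⊕ ({e : Sym2 V // e ∈ F.edgeFinset} × Fin r))) :=
  F.edgeFinset.attach.biUnion fun e =>
    (Finset.univ.filter fun v : V => v ∈ (e : Sym2 V)).image fun v =>
      insert (Sum.inl v) (Finset.univ.image fun i : Fin r => Sum.inr (e, i))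

/-- The (symmetric) vertex-vertex intersection weight
`B_{uv} = (1/r!) ∑_{i₁,…,i_r} A_{u,i₁,…,i_r} A_{i₁,…,i_r,v}`, where `A` is the
adjacency tensor of the hypergraph with edge set `EH`, as a function on `Sym2`. -/
def Bweight (N r : ℕ) (EH : Finset (Finset (Fin N))) : Sym2 (Fin N) → ℝ :=
  Sym2.lift ⟨fun u v => (1 / (Nat.factorial r : ℝ)) *
      ∑ w : Fin r → Fin N,
        (if insert u (Finset.image w Finset.univ) ∈ EH then (1 : ℝ) else 0) *
        (if insert v (Finset.image w Finset.univ) ∈ EH then (1 : ℝ) else 0),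
    by
      intro u v
      exact congrArg _ (Finset.sum_congr rfl fun w _ => mul_comm _ _)⟩

/-- Weighted homomorphism count of the graph `F` into the vertex-vertex intersection
graph `B[H]`. -/
def homCountB {V : Type*} [Fintype V] [DecidableEq V] (F : SimpleGraph V)
    [DecidableRel F.Adj] (N r : ℕ) (EH : Finset (Finset (Fin N))) : ℝ :=
  ∑ φ : V → Fin N, ∏ e ∈ F.edgeFinset, Bweight N r EH (e.map φ)

/-- Auxiliary symmetric indicator term. -/
def Tw (N r : ℕ) (EH : Finset (Finset (Fin N))) (w : Fin r → Fin N) : Sym2 (Fin N) → ℝ :=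
  Sym2.lift ⟨fun a b =>
      (if insert a (Finset.image w Finset.univ) ∈ EH then (1 : ℝ) else 0) *
      (if insert b (Finset.image w Finset.univ) ∈ EH then (1 : ℝ) else 0),
    fun a b => mul_comm _ _⟩

theorem stmt7 {V : Type*} [Fintype V] [DecidableEq V] (F : SimpleGraph V)
    [DecidableRel F.Adj] (r N : ℕ) (hr : 1 ≤ r)
    (EH : Finset (Finset (Fin N))) (hunif : ∀ e ∈ EH, e.card = r + 1) :
    (homCountHyper (interEdges F r) EH : ℝ)
      = ((Nat.factorial r : ℕ) : ℝ) ^ F.edgeFinset.card * homCountB F N r EH := by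
  classical
  have hfac : ((Nat.factorial r : ℕ) : ℝ) ≠ 0 := by
    exact_mod_cast (Nat.factorial_pos r).ne'
  -- r! * Bweight = sum of indicator products
  have hB : ∀ s : Sym2 (Fin N),
      ((Nat.factorial r : ℕ) : ℝ) * Bweight N r EH s
        = ∑ w : Fin r → Fin N, Tw N r EH w s := by
    intro s
    induction s using Sym2.ind with
    | _ a b =>
      simp only [Bweight, Tw, Sym2.lift_mk]
      rw [← mul_assoc, mul_one_div, div_self hfac, one_mul]
  -- per-edge indicator identity
  have hT : ∀ (ψ : V → Fin N) (w : Fin r → Fin N) (s : Sym2 V),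
      Tw N r EH w (s.map ψ)
        = if (∀ v ∈ s, insert (ψ v) (Finset.image w Finset.univ) ∈ EH) then (1:ℝ) else 0 := by
    intro ψ w s
    induction s using Sym2.ind with
    | _ u v =>
      by_cases h1 : insert (ψ u) (Finset.image w Finset.univ) ∈ EH <;>
        by_cases h2 : insert (ψ v) (Finset.image w Finset.univ) ∈ EH <;>
        simp [Tw, Sym2.mem_iff, h1, h2]
  -- unfold membership condition
  have hP : ∀ φ : V ⊕ ({e : Sym2 V // e ∈ F.edgeFinset} × Fin r) → Fin N,
      (∀ s ∈ interEdges F r, s.image φ ∈ EH) ↔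
        ∀ e : {e : Sym2 V // e ∈ F.edgeFinset}, ∀ v ∈ (e : Sym2 V),
          insert (φ (Sum.inl v))
            (Finset.image (fun i : Fin r => φ (Sum.inr (e, i))) Finset.univ) ∈ EH := by
    intro φ
    constructor
    · intro h e v hv
      have hm : insert (Sum.inl v) (Finset.univ.image fun i : Fin r => Sum.inr (e, i))
          ∈ interEdges F r :=
        Finset.mem_biUnion.mpr ⟨e, Finset.mem_attach _ _,
          Finset.mem_image.mpr ⟨v, Finset.mem_filter.mpr ⟨Finset.mem_univ v, hv⟩, rfl⟩⟩
      have := h _ hm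
      simpa [Finset.image_insert, Finset.image_image, Function.comp_def] using this
    · intro h s hs
      obtain ⟨e, -, hs2⟩ := Finset.mem_biUnion.mp hs
      obtain ⟨v, hv, rfl⟩ := Finset.mem_image.mp hs2
      simpa [Finset.image_insert, Finset.image_image, Function.comp_def]
        using h e v (Finset.mem_filter.mp hv).2
  -- LHS as a sum of indicators
  have hLHS : (homCountHyper (interEdges F r) EH : ℝ)
      = ∑ φ : V ⊕ ({e : Sym2 V // e ∈ F.edgeFinset} × Fin r) → Fin N,
          if (∀ s ∈ interEdges F r, s.image φ ∈ EH) then (1:ℝ) else 0 := by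
    rw [Finset.sum_boole, homCountHyper, Nat.card_eq_fintype_card, Fintype.card_subtype]
  rw [hLHS]
  -- RHS as double sum
  have hRHS : ((Nat.factorial r : ℕ) : ℝ) ^ F.edgeFinset.card * homCountB F N r EH
      = ∑ ψ : V → Fin N,
          ∑ g : {e : Sym2 V // e ∈ F.edgeFinset} → (Fin r → Fin N),
            ∏ e : {e : Sym2 V // e ∈ F.edgeFinset},
              Tw N r EH (g e) ((e : Sym2 V).map ψ) := by
    rw [homCountB, Finset.mul_sum]
    refine Finset.sum_congr rfl fun ψ _ => ?_
    have h1 : ((Nat.factorial r : ℕ) : ℝ) ^ F.edgeFinset.card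
          * ∏ e ∈ F.edgeFinset, Bweight N r EH (e.map ψ)
        = ∏ e ∈ F.edgeFinset, (((Nat.factorial r : ℕ) : ℝ) * Bweight N r EH (e.map ψ)) := by
      rw [Finset.prod_mul_distrib, Finset.prod_const]
    rw [h1]
    rw [← Finset.prod_coe_sort]
    rw [Finset.prod_congr rfl fun (e : {e : Sym2 V // e ∈ F.edgeFinset}) _ => hB ((e : Sym2 V).map ψ)]
    rw [Finset.prod_univ_sum]
    rw [Fintype.piFinset_univ]
  rw [hRHS]
  -- reindex
  let E : (V ⊕ ({e : Sym2 V // e ∈ F.edgeFinset} × Fin r) → Fin N)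
      ≃ (V → Fin N) × ({e : Sym2 V // e ∈ F.edgeFinset} → (Fin r → Fin N)) :=
    (Equiv.sumArrowEquivProdArrow _ _ _).trans
      ((Equiv.refl _).prodCongr (Equiv.curry _ _ _))
  have hsplit : (∑ p : (V → Fin N) × ({e : Sym2 V // e ∈ F.edgeFinset} → (Fin r → Fin N)),
        ∏ e : {e : Sym2 V // e ∈ F.edgeFinset}, Tw N r EH (p.2 e) ((e : Sym2 V).map p.1))
      = ∑ ψ : V → Fin N, ∑ g : {e : Sym2 V // e ∈ F.edgeFinset} → (Fin r → Fin N),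
          ∏ e : {e : Sym2 V // e ∈ F.edgeFinset}, Tw N r EH (g e) ((e : Sym2 V).map ψ) :=
    Fintype.sum_prod_type _
  rw [← hsplit]
  refine Fintype.sum_equiv E _ _ ?_
  intro φ
  have key : (if (∀ s ∈ interEdges F r, s.image φ ∈ EH) then (1:ℝ) else 0)
      = ∏ e : {e : Sym2 V // e ∈ F.edgeFinset},
          Tw N r EH (fun i => φ (Sum.inr (e, i))) ((e : Sym2 V).map (fun v => φ (Sum.inl v))) := by
    rw [Finset.prod_congr rfl fun e (_ : e ∈ Finset.univ) => hT _ _ _]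
    rw [Finset.prod_boole]
    have := hP φ
    by_cases hp : ∀ s ∈ interEdges F r, s.image φ ∈ EH
    · rw [if_pos hp, if_pos]
      intro e _
      exact (this.mp hp) e
    · rw [if_neg hp, if_neg]
      intro hc
      exact hp (this.mpr fun e => hc e (Finset.mem_univ e))
  rw [key]
  rfl
end
end

section
/- Let $U,W:[0,1]^6\to[0,1]$ be measurable. Define $I(U,W)(x_1,x_4)=\frac{1}{2}\int U(x_1,x_2,x_3,x_{12},x_{13},x_{23})W(x_2,x_3,x_4,x_{23},x_{24},x_{34})\,d(x_2,x_3,x_{12},x_{13},x_{23},x_{24},x_{34})$. Then $I$ is bilinear, $I(U,U)-I(W,U)=I(U-W,U)$, and $\|I(U-W,U)\|_\square \le \frac{1}{2}\|U-W\|_{\square,2}$. -/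
/-!
Bilinearity is linearity of the integral, all integrands being bounded and measurable.
For the cut-norm bound, test `I(V, U)` against `f(x₁) g(x₄)`: by Fubini this is half the integral
over `[0,1]^9` of `V(x₁,x₂,x₃,x₁₂,x₁₃,x₂₃) U(x₂,x₃,x₄,x₂₃,x₂₄,x₃₄) f(x₁) g(x₄)`. Integrating out
`x₄, x₂₄, x₃₄` first leaves `V` tested against `f(x₁)` (a function of `(x₁,x₂,x₁₂)`), the
`[0,1]`-valued marginal `∫ U g` (a function of `(x₂,x₃,x₂₃)`) and `1`, which is at most
`‖V‖_{□,2}`.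
-/

open MeasureTheory

noncomputable section

def piI (n : ℕ) : Set (Fin n → ℝ) := Set.univ.pi fun _ => I01

/-- The `2`-cut norm for kernels on `[0,1]^6`, coordinates ordered
`(x₁, x₂, x₃, x₁₂, x₁₃, x₂₃)` = indices `(0,1,2,3,4,5)`. -/
def cutNorm2 (V : (Fin 6 → ℝ) → ℝ) : ℝ :=
  sSup { c : ℝ | ∃ f g h : (Fin 3 → ℝ) → ℝ,
    Measurable f ∧ Measurable g ∧ Measurable h ∧
    (∀ x, f x ∈ I01) ∧ (∀ x, g x ∈ I01) ∧ (∀ x, h x ∈ I01) ∧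
    c = |∫ x in piI 6, V x * f ![x 0, x 1, x 3] * g ![x 1, x 2, x 5] * h ![x 0, x 2, x 4]| }

/-- `I(U,W)(x₁,x₄) = ½∫ U(x₁,x₂,x₃,x₁₂,x₁₃,x₂₃) W(x₂,x₃,x₄,x₂₃,x₂₄,x₃₄)`. -/
def Ibil (U W : (Fin 6 → ℝ) → ℝ) (x₁ x₄ : ℝ) : ℝ :=
  (1 / 2) * ∫ z : Fin 7 → ℝ in piI 7,
    U ![x₁, z 0, z 1, z 2, z 3, z 4] * W ![z 0, z 1, x₄, z 4, z 5, z 6]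

section PiFubini

variable {α E : Type*} [MeasurableSpace α] {μ : Measure α} [SigmaFinite μ]
  [NormedAddCommGroup E] [NormedSpace ℝ E]

theorem integral_pi_eq_integral_insertNth {n : ℕ} (i : Fin (n + 1))
    {F : (Fin (n + 1) → α) → E} (hF : Integrable F (Measure.pi fun _ => μ)) :
    ∫ y, F y ∂Measure.pi (fun _ => μ) =
      ∫ a, ∫ t, F (i.insertNth a t) ∂Measure.pi (fun _ => μ) ∂μ := by
  have he := (measurePreserving_piFinSuccAbove (fun _ : Fin (n + 1) => μ) i).symm
  rw [← he.integral_comp' F, integral_prod (fun z => F _) (he.integrable_comp_of_integrable hF)]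
  rfl

theorem integral_pi_eq_integral_append {m n : ℕ} {F : (Fin (m + n) → α) → E}
    (hF : Integrable F (Measure.pi fun _ => μ)) :
    ∫ y, F y ∂Measure.pi (fun _ => μ) =
      ∫ x, ∫ w, F (Fin.append x w) ∂Measure.pi (fun _ => μ) ∂Measure.pi (fun _ => μ) := by
  let e := (MeasurableEquiv.piCongrLeft (fun _ => α) finSumFinEquiv).symm.trans
    (MeasurableEquiv.sumPiEquivProdPi fun _ : Fin m ⊕ Fin n => α)
  have he : MeasurePreserving e.symm ((Measure.pi fun _ => μ).prod (Measure.pi fun _ => μ))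
      (Measure.pi fun _ => μ) :=
    ((measurePreserving_sumPiEquivProdPi fun _ => μ).comp
      (measurePreserving_piCongrLeft (fun _ => μ) finSumFinEquiv).symm).symm
  have he_apply (x : Fin m → α) (w : Fin n → α) : e.symm (x, w) = Fin.append x w := by
    funext i
    refine Fin.addCases (fun j => ?_) (fun j => ?_) i
    · rw [Fin.append_left, ← finSumFinEquiv_apply_left]
      exact Equiv.piCongrLeft_sumInl (fun _ => α) finSumFinEquiv x w j
    · rw [Fin.append_right, ← finSumFinEquiv_apply_right]
      exact Equiv.piCongrLeft_sumInr (fun _ => α) finSumFinEquiv x w j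
  rw [← he.integral_comp' F, integral_prod (fun z => F _) (he.integrable_comp_of_integrable hF)]
  simp only [he_apply]

end PiFubini

theorem integrable_of_abs_le {α : Type*} [MeasurableSpace α] {μ : Measure α} [IsFiniteMeasure μ]
    {f : α → ℝ} (hf : Measurable f) {C : ℝ} (hC : ∀ x, |f x| ≤ C) : Integrable f μ :=
  .of_bound hf.aestronglyMeasurable C (ae_of_all _ hC)

theorem volume_restrict_piI (n : ℕ) :
    volume.restrict (piI n) = Measure.pi fun _ : Fin n => volume.restrict I01 := by
  rw [piI, volume_pi, Measure.restrict_pi_pi]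

instance : IsProbabilityMeasure (volume.restrict I01) :=
  ⟨by simp [I01]⟩

instance (n : ℕ) : IsProbabilityMeasure (volume.restrict (piI n)) := by
  rw [volume_restrict_piI]
  infer_instance

theorem abs_le_one_of_mem_I01_s9 {x : ℝ} (hx : x ∈ I01) : |x| ≤ 1 :=
  abs_le.2 ⟨by linarith [hx.1], hx.2⟩

theorem abs_mul_le_of_mem_I01 {a b C : ℝ} (ha : |a| ≤ C) (hb : b ∈ I01) : |a * b| ≤ C := by
  rw [abs_mul]
  nlinarith [abs_nonneg a, abs_le_one_of_mem_I01_s9 hb, abs_nonneg b]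

section Bilinearity

variable {U U₁ U₂ W W₁ W₂ : (Fin 6 → ℝ) → ℝ} {x₁ x₄ : ℝ}

def IbilIntegrand (U W : (Fin 6 → ℝ) → ℝ) (x₁ x₄ : ℝ) (z : Fin 7 → ℝ) : ℝ :=
  U ![x₁, z 0, z 1, z 2, z 3, z 4] * W ![z 0, z 1, x₄, z 4, z 5, z 6]

theorem Ibil_eq_integral_IbilIntegrand :
    Ibil U W x₁ x₄ = 1 / 2 * ∫ z in piI 7, IbilIntegrand U W x₁ x₄ z :=
  rfl

theorem integrable_IbilIntegrand (hU : Measurable U) (hW : Measurable W)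
    (hU01 : ∀ x, U x ∈ I01) (hW01 : ∀ x, W x ∈ I01) (x₁ x₄ : ℝ) :
    Integrable (IbilIntegrand U W x₁ x₄) (volume.restrict (piI 7)) :=
  integrable_of_abs_le (by unfold IbilIntegrand; fun_prop) fun _ =>
    abs_mul_le_of_mem_I01 (abs_le_one_of_mem_I01_s9 (hU01 _)) (hW01 _)

theorem Ibil_sub_left (h₁ : Integrable (IbilIntegrand U₁ W x₁ x₄) (volume.restrict (piI 7)))
    (h₂ : Integrable (IbilIntegrand U₂ W x₁ x₄) (volume.restrict (piI 7))) :
    Ibil (fun x => U₁ x - U₂ x) W x₁ x₄ = Ibil U₁ W x₁ x₄ - Ibil U₂ W x₁ x₄ := by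
  have h : IbilIntegrand (fun x => U₁ x - U₂ x) W x₁ x₄ =
      fun z => IbilIntegrand U₁ W x₁ x₄ z - IbilIntegrand U₂ W x₁ x₄ z := by
    funext z
    exact sub_mul _ _ _
  simp only [Ibil_eq_integral_IbilIntegrand, h, integral_sub h₁ h₂]
  ring

variable (a b : ℝ)

theorem Ibil_linear_left (h₁ : Integrable (IbilIntegrand U₁ W x₁ x₄) (volume.restrict (piI 7)))
    (h₂ : Integrable (IbilIntegrand U₂ W x₁ x₄) (volume.restrict (piI 7))) :
    Ibil (fun x => a * U₁ x + b * U₂ x) W x₁ x₄ = a * Ibil U₁ W x₁ x₄ + b * Ibil U₂ W x₁ x₄ := by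
  have h : IbilIntegrand (fun x => a * U₁ x + b * U₂ x) W x₁ x₄ =
      fun z => a * IbilIntegrand U₁ W x₁ x₄ z + b * IbilIntegrand U₂ W x₁ x₄ z := by
    funext z
    simp only [IbilIntegrand]
    ring
  simp only [Ibil_eq_integral_IbilIntegrand, h, integral_add (h₁.const_mul a) (h₂.const_mul b),
    integral_const_mul]
  ring

theorem Ibil_linear_right (h₁ : Integrable (IbilIntegrand U W₁ x₁ x₄) (volume.restrict (piI 7)))
    (h₂ : Integrable (IbilIntegrand U W₂ x₁ x₄) (volume.restrict (piI 7))) :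
    Ibil U (fun x => a * W₁ x + b * W₂ x) x₁ x₄ = a * Ibil U W₁ x₁ x₄ + b * Ibil U W₂ x₁ x₄ := by
  have h : IbilIntegrand U (fun x => a * W₁ x + b * W₂ x) x₁ x₄ =
      fun z => a * IbilIntegrand U W₁ x₁ x₄ z + b * IbilIntegrand U W₂ x₁ x₄ z := by
    funext z
    simp only [IbilIntegrand]
    ring
  simp only [Ibil_eq_integral_IbilIntegrand, h, integral_add (h₁.const_mul a) (h₂.const_mul b),
    integral_const_mul]
  ring

end Bilinearity

section CutNorm

theorem cutNorm_le {F : ℝ → ℝ → ℝ} {c : ℝ} (hc : 0 ≤ c)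
    (h : ∀ f g : ℝ → ℝ, Measurable f → Measurable g → (∀ x, f x ∈ I01) → (∀ x, g x ∈ I01) →
      |∫ x in I01, ∫ y in I01, F x y * f x * g y| ≤ c) :
    cutNorm F ≤ c :=
  Real.sSup_le (by rintro _ ⟨f, g, hf, hg, hf01, hg01, rfl⟩; exact h f g hf hg hf01 hg01) hc

variable {V : (Fin 6 → ℝ) → ℝ} {C : ℝ}

theorem abs_integral_le_cutNorm2 (hV : ∀ x, |V x| ≤ C) {f g h : (Fin 3 → ℝ) → ℝ}
    (hf : Measurable f) (hg : Measurable g) (hh : Measurable h)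
    (hf01 : ∀ x, f x ∈ I01) (hg01 : ∀ x, g x ∈ I01) (hh01 : ∀ x, h x ∈ I01) :
    |∫ x in piI 6, V x * f ![x 0, x 1, x 3] * g ![x 1, x 2, x 5] * h ![x 0, x 2, x 4]|
      ≤ cutNorm2 V := by
  refine le_csSup ⟨C, ?_⟩ ⟨f, g, h, hf, hg, hh, hf01, hg01, hh01, rfl⟩
  rintro _ ⟨f, g, h, -, -, -, hf01, hg01, hh01, rfl⟩
  have hbound : ∀ x,
      |V x * f ![x 0, x 1, x 3] * g ![x 1, x 2, x 5] * h ![x 0, x 2, x 4]| ≤ C := fun x =>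
    abs_mul_le_of_mem_I01 (abs_mul_le_of_mem_I01 (abs_mul_le_of_mem_I01 (hV x) (hf01 _))
      (hg01 _)) (hh01 _)
  simpa using norm_integral_le_of_norm_le_const (μ := volume.restrict (piI 6))
    (ae_of_all _ fun x => (Real.norm_eq_abs _).trans_le (hbound x))

theorem cutNorm2_nonneg (hV : ∀ x, |V x| ≤ C) : 0 ≤ cutNorm2 V :=
  (abs_nonneg _).trans <| abs_integral_le_cutNorm2 hV (f := fun _ => 0) (g := fun _ => 0)
    (h := fun _ => 0) measurable_const measurable_const measurable_const
    (fun _ => ⟨le_rfl, zero_le_one⟩) (fun _ => ⟨le_rfl, zero_le_one⟩)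
    (fun _ => ⟨le_rfl, zero_le_one⟩)

end CutNorm

section IbilCutNorm

variable {V U : (Fin 6 → ℝ) → ℝ} {f g : ℝ → ℝ} {C : ℝ}

/-- `(x₂, x₃, x₂₃) ↦ ∫ U(x₂, x₃, x₄, x₂₃, x₂₄, x₃₄) g(x₄) d(x₄, x₂₄, x₃₄)`. -/
def marginalRight (U : (Fin 6 → ℝ) → ℝ) (g : ℝ → ℝ) (t : Fin 3 → ℝ) : ℝ :=
  ∫ w in piI 3, U ![t 0, t 1, w 0, t 2, w 1, w 2] * g (w 0)

theorem measurable_marginalRight (hU : Measurable U) (hg : Measurable g) :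
    Measurable (marginalRight U g) := by
  have h : Measurable fun p : (Fin 3 → ℝ) × (Fin 3 → ℝ) =>
      U ![p.1 0, p.1 1, p.2 0, p.1 2, p.2 1, p.2 2] * g (p.2 0) := by
    fun_prop
  exact h.stronglyMeasurable.integral_prod_right'.measurable

theorem marginalRight_mem_I01 (hU01 : ∀ x, U x ∈ I01) (hg01 : ∀ x, g x ∈ I01)
    (t : Fin 3 → ℝ) : marginalRight U g t ∈ I01 := by
  refine ⟨integral_nonneg fun w => mul_nonneg (hU01 _).1 (hg01 _).1, (le_abs_self _).trans ?_⟩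
  simpa [marginalRight] using norm_integral_le_of_norm_le_const (μ := volume.restrict (piI 3))
    (ae_of_all _ fun w => (Real.norm_eq_abs _).trans_le <|
      abs_mul_le_of_mem_I01 (abs_le_one_of_mem_I01_s9 (hU01 _)) (hg01 _))

/-- Integrand in the coordinates `(x₁, x₂, x₃, x₁₂, x₁₃, x₂₃, x₄, x₂₄, x₃₄)`. -/
def gluedIntegrand (V U : (Fin 6 → ℝ) → ℝ) (f g : ℝ → ℝ) (y : Fin 9 → ℝ) : ℝ :=
  V ![y 0, y 1, y 2, y 3, y 4, y 5] * U ![y 1, y 2, y 6, y 5, y 7, y 8] * f (y 0) * g (y 6)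

theorem gluedIntegrand_insertNth (x₁ x₄ : ℝ) (z : Fin 7 → ℝ) :
    gluedIntegrand V U f g (Fin.insertNth 0 x₁ (Fin.insertNth 5 x₄ z)) =
      IbilIntegrand V U x₁ x₄ z * (f x₁ * g x₄) := by
  simp only [gluedIntegrand, IbilIntegrand, ← mul_assoc]
  rfl

theorem gluedIntegrand_append (x : Fin 6 → ℝ) (w : Fin 3 → ℝ) :
    gluedIntegrand V U f g (Fin.append x w) =
      V x * f (x 0) * (U ![x 1, x 2, w 0, x 5, w 1, w 2] * g (w 0)) := by
  have hx : ![x 0, x 1, x 2, x 3, x 4, x 5] = x := by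
    funext i
    fin_cases i <;> rfl
  change V ![x 0, x 1, x 2, x 3, x 4, x 5] * U ![x 1, x 2, w 0, x 5, w 1, w 2] * f (x 0) * g (w 0)
    = _
  rw [hx]
  ring

theorem measurable_gluedIntegrand (hV : Measurable V) (hU : Measurable U) (hf : Measurable f)
    (hg : Measurable g) : Measurable (gluedIntegrand V U f g) := by
  unfold gluedIntegrand
  fun_prop

theorem abs_gluedIntegrand_le (hV : ∀ x, |V x| ≤ C) (hU01 : ∀ x, U x ∈ I01)
    (hf01 : ∀ x, f x ∈ I01) (hg01 : ∀ x, g x ∈ I01) (y : Fin 9 → ℝ) :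
    |gluedIntegrand V U f g y| ≤ C :=
  abs_mul_le_of_mem_I01 (abs_mul_le_of_mem_I01 (abs_mul_le_of_mem_I01 (hV _) (hU01 _))
    (hf01 _)) (hg01 _)

theorem integral_Ibil_mul_eq_integral_gluedIntegrand (hV : Measurable V) (hU : Measurable U)
    (hf : Measurable f) (hg : Measurable g) (hVC : ∀ x, |V x| ≤ C) (hU01 : ∀ x, U x ∈ I01)
    (hf01 : ∀ x, f x ∈ I01) (hg01 : ∀ x, g x ∈ I01) :
    ∫ x₁ in I01, ∫ x₄ in I01, Ibil V U x₁ x₄ * f x₁ * g x₄ =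
      1 / 2 * ∫ y in piI 9, gluedIntegrand V U f g y := by
  have hint {n : ℕ} {φ : (Fin n → ℝ) → Fin 9 → ℝ} (hφ : Measurable φ) :
      Integrable (fun t => gluedIntegrand V U f g (φ t))
        (Measure.pi fun _ : Fin n => volume.restrict I01) :=
    integrable_of_abs_le ((measurable_gluedIntegrand hV hU hf hg).comp hφ) fun _ =>
      abs_gluedIntegrand_le hVC hU01 hf01 hg01 _
  have hpoint (x₁ x₄ : ℝ) : Ibil V U x₁ x₄ * f x₁ * g x₄ = 1 / 2 *
      ∫ z in piI 7, gluedIntegrand V U f g (Fin.insertNth 0 x₁ (Fin.insertNth 5 x₄ z)) := by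
    simp only [gluedIntegrand_insertNth, integral_mul_const, Ibil_eq_integral_IbilIntegrand]
    ring
  simp only [hpoint, integral_const_mul, volume_restrict_piI]
  refine congrArg _ (Eq.symm ?_)
  refine (integral_pi_eq_integral_insertNth 0 (hint measurable_id)).trans ?_
  congr 1 with x₁
  exact integral_pi_eq_integral_insertNth 5 (hint
    ((MeasurableEquiv.piFinSuccAbove (fun _ => ℝ) 0).symm.measurable.comp measurable_prodMk_left))

theorem integral_gluedIntegrand_eq_integral_marginalRight (hV : Measurable V)
    (hU : Measurable U) (hf : Measurable f) (hg : Measurable g) (hVC : ∀ x, |V x| ≤ C)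
    (hU01 : ∀ x, U x ∈ I01) (hf01 : ∀ x, f x ∈ I01) (hg01 : ∀ x, g x ∈ I01) :
    ∫ y in piI 9, gluedIntegrand V U f g y =
      ∫ x in piI 6, V x * f (x 0) * marginalRight U g ![x 1, x 2, x 5] := by
  have hint : Integrable (gluedIntegrand V U f g)
      (Measure.pi fun _ : Fin (6 + 3) => volume.restrict I01) :=
    integrable_of_abs_le (measurable_gluedIntegrand hV hU hf hg)
      (abs_gluedIntegrand_le hVC hU01 hf01 hg01)
  simp only [volume_restrict_piI, marginalRight]
  refine (integral_pi_eq_integral_append (m := 6) (n := 3) hint).trans ?_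
  congr 1 with x
  simp only [gluedIntegrand_append, integral_const_mul]
  rfl

theorem cutNorm_Ibil_le (hV : Measurable V) (hU : Measurable U) (hVC : ∀ x, |V x| ≤ C)
    (hU01 : ∀ x, U x ∈ I01) : cutNorm (Ibil V U) ≤ 1 / 2 * cutNorm2 V := by
  refine cutNorm_le (mul_nonneg (by norm_num) (cutNorm2_nonneg hVC))
    fun f g hf hg hf01 hg01 => ?_
  rw [integral_Ibil_mul_eq_integral_gluedIntegrand hV hU hf hg hVC hU01 hf01 hg01,
    integral_gluedIntegrand_eq_integral_marginalRight hV hU hf hg hVC hU01 hf01 hg01,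
    abs_mul, abs_of_pos one_half_pos]
  gcongr
  simpa using abs_integral_le_cutNorm2 hVC (f := fun t => f (t 0)) (g := marginalRight U g)
    (h := fun _ => 1) (hf.comp (measurable_pi_apply 0)) (measurable_marginalRight hU hg)
    measurable_const (fun _ => hf01 _) (marginalRight_mem_I01 hU01 hg01)
    (fun _ => ⟨zero_le_one, le_rfl⟩)

end IbilCutNorm

theorem stmt9 (U W : (Fin 6 → ℝ) → ℝ)
    (hUmeas : Measurable U) (hWmeas : Measurable W)
    (hUrange : ∀ x, U x ∈ I01) (hWrange : ∀ x, W x ∈ I01) :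
    -- bilinearity of `I` (on bounded measurable arguments)
    (∀ (a b : ℝ) (U₁ U₂ W' : (Fin 6 → ℝ) → ℝ),
      Measurable U₁ → Measurable U₂ → Measurable W' →
      (∀ x, U₁ x ∈ I01) → (∀ x, U₂ x ∈ I01) → (∀ x, W' x ∈ I01) →
      ∀ x₁ x₄,
        Ibil (fun x => a * U₁ x + b * U₂ x) W' x₁ x₄
            = a * Ibil U₁ W' x₁ x₄ + b * Ibil U₂ W' x₁ x₄
          ∧ Ibil W' (fun x => a * U₁ x + b * U₂ x) x₁ x₄
            = a * Ibil W' U₁ x₁ x₄ + b * Ibil W' U₂ x₁ x₄)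
    -- `I(U,U) - I(W,U) = I(U - W, U)`
    ∧ (∀ x₁ x₄, Ibil U U x₁ x₄ - Ibil W U x₁ x₄ = Ibil (fun x => U x - W x) U x₁ x₄)
    -- `‖I(U-W, U)‖_□ ≤ ½ ‖U - W‖_{□,2}`
    ∧ cutNorm (Ibil (fun x => U x - W x) U) ≤ (1 / 2) * cutNorm2 (fun x => U x - W x) := by
  have hUW : ∀ x, |U x - W x| ≤ 1 := fun x => abs_sub_le_iff.2
    ⟨by linarith [(hUrange x).2, (hWrange x).1], by linarith [(hUrange x).1, (hWrange x).2]⟩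
  refine ⟨fun a b U₁ U₂ W' hU₁ hU₂ hW' hU₁01 hU₂01 hW'01 x₁ x₄ => ⟨?_, ?_⟩,
    fun x₁ x₄ => ?_, cutNorm_Ibil_le (hUmeas.sub hWmeas) hUmeas hUW hUrange⟩
  · exact Ibil_linear_left a b (integrable_IbilIntegrand hU₁ hW' hU₁01 hW'01 x₁ x₄)
      (integrable_IbilIntegrand hU₂ hW' hU₂01 hW'01 x₁ x₄)
  · exact Ibil_linear_right a b (integrable_IbilIntegrand hW' hU₁ hW'01 hU₁01 x₁ x₄)
      (integrable_IbilIntegrand hW' hU₂ hW'01 hU₂01 x₁ x₄)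
  · exact (Ibil_sub_left (integrable_IbilIntegrand hUmeas hUmeas hUrange hUrange x₁ x₄)
      (integrable_IbilIntegrand hWmeas hUmeas hWrange hUrange x₁ x₄)).symm
end
end
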